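/- arXiv:1105.0035 — 2 statements merged into one kernel-verified Lean document; each statement's English description precedes it below -/
import Mathlib

section
/- The water-filling rate function R(P) = ∑_{z=1}^Z log(max{μ(P) ε_z, 1}), where μ(P) solves ∑_z max{μ(P) − 1/ε_z, 0} = P, is a strictly concave, strictly increasing function of P on (0, ∞). -/
/-!
At water level `m`, a channel of gain `e` carries power `max m (1/e) - 1/e` and rate
`log (max m (1/e)) + log e`. The tangent-line bound `log u - log v ≤ (u - v) / v` for the
logarithm therefore gives `R Q ≤ R P + (Q - P) / μ P`, strictly for `Q ≠ P` because some channel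
is active at level `μ P > 0`. A function with a strict positive supergradient `1 / μ P` at
every point is strictly concave and strictly increasing.
-/

theorem strictConcaveOn_of_lt_add_apply_sub {𝕜 E : Type*} [Field 𝕜] [LinearOrder 𝕜]
    [IsStrictOrderedRing 𝕜] [AddCommGroup E] [Module 𝕜 E] {s : Set E} {f : E → 𝕜}
    (hs : Convex 𝕜 s) (φ : E → E →ₗ[𝕜] 𝕜)
    (h : ∀ x ∈ s, ∀ y ∈ s, y ≠ x → f y < f x + φ x (y - x)) : StrictConcaveOn 𝕜 s f := by
  refine ⟨hs, fun x hx y hy hxy a b ha hb hab => ?_⟩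
  set z := a • x + b • y
  have hz : z ∈ s := hs hx hy ha.le hb.le hab
  have hxz : x ≠ z := fun h => hxy (left_mem_openSegment_iff.1 ⟨a, b, ha, hb, hab, h.symm⟩)
  have hyz : y ≠ z := fun h => hxy (right_mem_openSegment_iff.1 ⟨a, b, ha, hb, hab, h.symm⟩)
  have hφ : a * φ z (x - z) + b * φ z (y - z) = 0 := by
    have : a • (x - z) + b • (y - z) = 0 := by
      rw [smul_sub, smul_sub, sub_add_sub_comm, ← add_smul, hab, one_smul, sub_self]
    simpa only [map_add, map_smul, smul_eq_mul, map_zero] using congrArg (φ z) this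
  have hx' := mul_lt_mul_of_pos_left (h z hz x hx hxz) ha
  have hy' := mul_lt_mul_of_pos_left (h z hz y hy hyz) hb
  simp only [smul_eq_mul]
  linear_combination hx' + hy' + hφ + f z * hab

theorem strictMonoOn_of_lt_add_mul_sub {𝕜 : Type*} [Field 𝕜] [LinearOrder 𝕜]
    [IsStrictOrderedRing 𝕜] {s : Set 𝕜} {f g : 𝕜 → 𝕜}
    (h : ∀ x ∈ s, ∀ y ∈ s, y ≠ x → f y < f x + g x * (y - x)) (hg : ∀ x ∈ s, 0 ≤ g x) :
    StrictMonoOn f s := by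
  intro x hx y hy hxy
  have := h y hy x hx hxy.ne
  nlinarith [mul_nonneg (hg y hy) (sub_nonneg.2 hxy.le)]

namespace Real

theorem log_sub_log_le_sub_div {u v : ℝ} (hu : 0 < u) (hv : 0 < v) :
    log u - log v ≤ (u - v) / v := by
  rw [← log_div hu.ne' hv.ne', sub_div, div_self hv.ne']
  exact log_le_sub_one_of_pos (div_pos hu hv)

theorem log_sub_log_lt_sub_div {u v : ℝ} (hu : 0 < u) (hv : 0 < v) (huv : u ≠ v) :
    log u - log v < (u - v) / v := by
  rw [← log_div hu.ne' hv.ne', sub_div, div_self hv.ne']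
  exact log_lt_sub_one_of_pos (div_pos hu hv) (by rwa [Ne, div_eq_one_iff_eq hv.ne'])

end Real

noncomputable section

namespace Waterfilling

open Finset

def channelRate (e m : ℝ) : ℝ := Real.log (max (m * e) 1)

def channelPower (e m : ℝ) : ℝ := max (m - 1 / e) 0

variable {e m : ℝ}

theorem channelRate_eq (he : 0 < e) (m : ℝ) :
    channelRate e m = Real.log (max m (1 / e)) + Real.log e := by
  have hv : 0 < max m (1 / e) := lt_max_of_lt_right (by positivity)
  rw [channelRate, ← Real.log_mul hv.ne' he.ne', max_mul_of_nonneg _ _ he.le,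
    one_div_mul_cancel he.ne']

theorem channelPower_eq (m : ℝ) : channelPower e m = max m (1 / e) - 1 / e := by
  rw [channelPower, ← max_sub_sub_right, sub_self]

theorem channelRate_sub_le (he : 0 < e) (hm : 0 < m) (m' : ℝ) :
    channelRate e m' - channelRate e m ≤ (channelPower e m' - channelPower e m) / m := by
  rw [channelRate_eq he, channelRate_eq he, channelPower_eq, channelPower_eq,
    add_sub_add_right_eq_sub, sub_sub_sub_cancel_right]
  have hc : 0 < 1 / e := by positivity
  refine (Real.log_sub_log_le_sub_div (lt_max_of_lt_right hc) (lt_max_of_lt_right hc)).trans ?_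
  rcases le_total (1 / e) m with hem | hme
  · rw [max_eq_left hem]
  · rw [max_eq_right hme]
    exact div_le_div_of_nonneg_left (sub_nonneg.2 (le_max_right _ _)) hm hme

theorem channelRate_sub_lt (he : 0 < e) (hm : 1 / e < m) {m' : ℝ} (hne : m' ≠ m) :
    channelRate e m' - channelRate e m < (channelPower e m' - channelPower e m) / m := by
  rw [channelRate_eq he, channelRate_eq he, channelPower_eq, channelPower_eq,
    add_sub_add_right_eq_sub, sub_sub_sub_cancel_right, max_eq_left hm.le]
  have hc : 0 < 1 / e := by positivity
  refine Real.log_sub_log_lt_sub_div (lt_max_of_lt_right hc) (hc.trans hm) ?_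
  intro hu
  rcases max_choice m' (1 / e) with h | h <;> rw [h] at hu
  · exact hne hu
  · exact hm.ne hu

variable {ι : Type*} [Fintype ι] {ε : ι → ℝ}

def totalRate (ε : ι → ℝ) (m : ℝ) : ℝ := ∑ i, channelRate (ε i) m

def totalPower (ε : ι → ℝ) (m : ℝ) : ℝ := ∑ i, channelPower (ε i) m

theorem exists_one_div_lt_of_totalPower_pos (h : 0 < totalPower ε m) : ∃ i, 1 / ε i < m := by
  obtain ⟨i, -, hi⟩ := exists_lt_of_sum_lt (s := univ) (f := fun _ => 0)
    (g := fun i => channelPower (ε i) m) (by rw [sum_const_zero]; exact h)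
  exact ⟨i, sub_pos.1 ((lt_max_iff.1 hi).resolve_right (lt_irrefl 0))⟩

theorem pos_of_totalPower_pos (hε : ∀ i, 0 < ε i) (h : 0 < totalPower ε m) : 0 < m := by
  obtain ⟨i, hi⟩ := exists_one_div_lt_of_totalPower_pos h
  exact (one_div_pos.2 (hε i)).trans hi

theorem totalRate_lt (hε : ∀ i, 0 < ε i) (h : 0 < totalPower ε m) {m' : ℝ} (hne : m' ≠ m) :
    totalRate ε m' < totalRate ε m + (totalPower ε m' - totalPower ε m) / m := by
  obtain ⟨i, hi⟩ := exists_one_div_lt_of_totalPower_pos h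
  have hsum := sum_lt_sum (s := univ)
    (fun j _ => channelRate_sub_le (hε j) (pos_of_totalPower_pos hε h) m')
    ⟨i, mem_univ i, channelRate_sub_lt (hε i) hi hne⟩
  rw [← sum_div, sum_sub_distrib, sum_sub_distrib] at hsum
  unfold totalRate totalPower
  linarith

end Waterfilling

end

theorem waterfilling_rate_strictConcave_strictMono_general
    (Z : ℕ) (ε : Fin Z → ℝ)
    (hεpos : ∀ z, 0 < ε z)
    (μ : ℝ → ℝ)
    (hμ : ∀ P : ℝ, 0 < P → ∑ z, max (μ P - 1 / ε z) 0 = P)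
    (R : ℝ → ℝ)
    (hR : ∀ P : ℝ, R P = ∑ z, Real.log (max (μ P * ε z) 1)) :
    StrictConcaveOn ℝ (Set.Ioi 0) R ∧ StrictMonoOn R (Set.Ioi 0) := by
  have hpower (P : ℝ) (hP : 0 < P) : Waterfilling.totalPower ε (μ P) = P := hμ P hP
  have hrate (P : ℝ) : R P = Waterfilling.totalRate ε (μ P) := hR P
  have hlevel (P : ℝ) (hP : P ∈ Set.Ioi 0) : 0 < μ P :=
    Waterfilling.pos_of_totalPower_pos hεpos ((hpower P hP).symm ▸ hP)
  have htangent : ∀ P ∈ Set.Ioi 0, ∀ Q ∈ Set.Ioi 0, Q ≠ P →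
      R Q < R P + (μ P)⁻¹ * (Q - P) := by
    intro P hP Q hQ hQP
    have hne : μ Q ≠ μ P := fun h => hQP (by rw [← hpower Q hQ, ← hpower P hP, h])
    have := Waterfilling.totalRate_lt hεpos ((hpower P hP).symm ▸ hP) hne
    rwa [hpower P hP, hpower Q hQ, ← hrate, ← hrate, div_eq_inv_mul] at this
  exact ⟨strictConcaveOn_of_lt_add_apply_sub (convex_Ioi 0)
      (fun P => LinearMap.mulLeft ℝ (μ P)⁻¹) htangent,
    strictMonoOn_of_lt_add_mul_sub htangent fun P hP => (inv_pos.2 (hlevel P hP)).le⟩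

/-- The water-filling rate function `R P = ∑ z, log (max (μ P * ε z) 1)`,
where the water level `μ P` solves `∑ z, max (μ P - 1/ε z) 0 = P`, is strictly
concave and strictly increasing on `(0, ∞)`. -/
theorem waterfilling_rate_strictConcave_strictMono
    (Z : ℕ) (hZ : 0 < Z) (ε : Fin Z → ℝ)
    (hεpos : ∀ z, 0 < ε z)
    (hεmono : ∀ i j : Fin Z, i ≤ j → ε j ≤ ε i)
    (μ : ℝ → ℝ)
    (hμ : ∀ P : ℝ, 0 < P → ∑ z, max (μ P - 1 / ε z) 0 = P)
    (R : ℝ → ℝ)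
    (hR : ∀ P : ℝ, R P = ∑ z, Real.log (max (μ P * ε z) 1)) :
    StrictConcaveOn ℝ (Set.Ioi 0) R ∧ StrictMonoOn R (Set.Ioi 0) :=
  waterfilling_rate_strictConcave_strictMono_general Z ε hεpos μ hμ R hR
end

section
/- For a complex matrix H with squared Frobenius norm ‖H‖_F² and any positive semidefinite Ξ with Tr(Ξ) = P, it holds that log det(I + H Ξ H†) ≤ rank(H) · log(1 + P·‖H‖_F²), so the aggregate power gain ‖H‖_F² upper-bounds the per-stream channel quality used for norm-based BS selection. -/
/-!
Let `A = H Ξ Hᴴ`, which is positive semidefinite with eigenvalues `μᵢ ≥ 0`. Then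
`det (1 + A) = ∏ (1 + μᵢ)`, and only the `rank A ≤ rank H` factors with `μᵢ ≠ 0` differ from `1`;
each of them is at most `1 + Tr A`. Writing `Ξ = Bᴴ B`, `Tr A = ‖H Bᴴ‖_F² ≤ ‖H‖_F² ‖B‖_F²`
by submultiplicativity of the Frobenius norm, and `‖B‖_F² = Tr Ξ = P`.
-/

open ComplexOrder
open scoped Matrix

theorem prod_one_add_le_one_add_sum_pow_card_ne_zero {ι : Type*} [Fintype ι] {f : ι → ℝ}
    (hf : ∀ i, 0 ≤ f i) :
    ∏ i, (1 + f i) ≤ (1 + ∑ i, f i) ^ Fintype.card {i // f i ≠ 0} := by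
  classical
  rw [Fintype.card_subtype, ← Finset.prod_const,
    ← Finset.prod_filter_of_ne fun i _ h => by simpa using h]
  exact Finset.prod_le_prod (fun i _ => by linarith [hf i])
    fun i _ => by linarith [Finset.single_le_sum (fun j _ => hf j) (Finset.mem_univ i)]

namespace Matrix

variable {𝕜 l m n : Type*} [RCLike 𝕜] [Fintype l] [Fintype m] [Fintype n]

theorem re_trace_mul_conjTranspose_self (A : Matrix m n 𝕜) :
    RCLike.re (A * Aᴴ).trace = ∑ i, ∑ j, ‖A i j‖ ^ 2 := by
  simp [trace, mul_apply, RCLike.mul_conj]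

section Frobenius

attribute [local instance] Matrix.frobeniusNormedAddCommGroup

theorem frobenius_norm_sq (A : Matrix m n 𝕜) : ‖A‖ ^ 2 = ∑ i, ∑ j, ‖A i j‖ ^ 2 := by
  rw [frobenius_norm_def, ← Real.sqrt_eq_rpow, Real.sq_sqrt (by positivity)]
  simp_rw [Real.rpow_two]

theorem sum_sum_norm_mul_sq_le (A : Matrix l m 𝕜) (B : Matrix m n 𝕜) :
    ∑ i, ∑ k, ‖(A * B) i k‖ ^ 2 ≤ (∑ i, ∑ j, ‖A i j‖ ^ 2) * ∑ j, ∑ k, ‖B j k‖ ^ 2 := by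
  simp_rw [← frobenius_norm_sq, ← mul_pow]
  gcongr
  exact frobenius_norm_mul A B

end Frobenius

open scoped MatrixOrder in
theorem PosSemidef.re_trace_mul_mul_conjTranspose_le {Ξ : Matrix m m 𝕜} (hΞ : Ξ.PosSemidef)
    (H : Matrix n m 𝕜) :
    RCLike.re (H * Ξ * Hᴴ).trace ≤ RCLike.re Ξ.trace * ∑ i, ∑ j, ‖H i j‖ ^ 2 := by
  classical
  obtain ⟨B, rfl⟩ := CStarAlgebra.nonneg_iff_eq_star_mul_self.mp hΞ.nonneg
  have hB : star B * B = Bᴴ * Bᴴᴴ := by rw [conjTranspose_conjTranspose, star_eq_conjTranspose]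
  have hHB : H * (star B * B) * Hᴴ = (H * Bᴴ) * (H * Bᴴ)ᴴ := by
    simp only [hB, conjTranspose_mul, Matrix.mul_assoc]
  rw [hHB, hB, re_trace_mul_conjTranspose_self, re_trace_mul_conjTranspose_self, mul_comm]
  exact sum_sum_norm_mul_sq_le H Bᴴ

variable [DecidableEq n]

theorem IsHermitian.det_one_add {A : Matrix n n 𝕜} (hA : A.IsHermitian) :
    (1 + A).det = ∏ i, (1 + hA.eigenvalues i : 𝕜) := by
  have h : 1 + A = cfc (fun x : ℝ => 1 + x) A := by
    rw [cfc_add .., cfc_const_one .., cfc_id' ..]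
  rw [h, hA.cfc_eq]
  simp [IsHermitian.cfc, -Unitary.conjStarAlgAut_apply, det_diagonal]

theorem PosSemidef.log_re_det_one_add_le {A : Matrix n n 𝕜} (hA : A.PosSemidef) :
    Real.log (RCLike.re (1 + A).det) ≤ A.rank * Real.log (1 + RCLike.re A.trace) := by
  have hμ : ∀ i, 0 ≤ hA.isHermitian.eigenvalues i := hA.eigenvalues_nonneg
  have hdet : RCLike.re (1 + A).det = ∏ i, (1 + hA.isHermitian.eigenvalues i) := by
    rw [hA.isHermitian.det_one_add]
    norm_cast
  have htr : RCLike.re A.trace = ∑ i, hA.isHermitian.eigenvalues i := by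
    rw [hA.isHermitian.trace_eq_sum_eigenvalues]
    norm_cast
  rw [hdet, htr, hA.isHermitian.rank_eq_card_non_zero_eigs, ← Real.log_pow]
  exact Real.log_le_log (Finset.prod_pos fun i _ => by linarith [hμ i])
    (prod_one_add_le_one_add_sum_pow_card_ne_zero hμ)

end Matrix

theorem logdet_le_rank_mul_log_frobenius_general
    (N M : ℕ) (H : Matrix (Fin N) (Fin M) ℂ)
    (P : ℝ)
    (Ξ : Matrix (Fin M) (Fin M) ℂ) (hΞ : Ξ.PosSemidef)
    (htr : Ξ.trace = (P : ℂ)) :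
    Real.log ((1 + H * Ξ * H.conjTranspose).det.re)
      ≤ (H.rank : ℝ) *
          Real.log (1 + P * ∑ i, ∑ j, ‖H i j‖ ^ 2) := by
  have hA := hΞ.mul_mul_conjTranspose_same H
  have htrace_le : RCLike.re (H * Ξ * Hᴴ).trace ≤ P * ∑ i, ∑ j, ‖H i j‖ ^ 2 := by
    simpa [htr] using hΞ.re_trace_mul_mul_conjTranspose_le H
  have htrace_nonneg : 0 ≤ RCLike.re (H * Ξ * Hᴴ).trace :=
    (RCLike.nonneg_iff.mp hA.trace_nonneg).1
  have hrank : (H * Ξ * Hᴴ).rank ≤ H.rank := by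
    rw [Matrix.mul_assoc]
    exact Matrix.rank_mul_le_left _ _
  calc Real.log ((1 + H * Ξ * Hᴴ).det.re)
      ≤ (H * Ξ * Hᴴ).rank * Real.log (1 + RCLike.re (H * Ξ * Hᴴ).trace) :=
        hA.log_re_det_one_add_le
    _ ≤ H.rank * Real.log (1 + P * ∑ i, ∑ j, ‖H i j‖ ^ 2) := by
        gcongr
        exact Real.log_nonneg (by linarith)

/-- For a complex matrix `H` and any PSD `Ξ` with `Tr Ξ = P`, the rate
`log det (I + H Ξ Hᴴ)` is at most `rank H · log (1 + P ‖H‖_F²)`, where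
`‖H‖_F²` is the squared Frobenius norm (the aggregate power gain). -/
theorem logdet_le_rank_mul_log_frobenius
    (N M : ℕ) (H : Matrix (Fin N) (Fin M) ℂ)
    (P : ℝ) (hP : 0 < P)
    (Ξ : Matrix (Fin M) (Fin M) ℂ) (hΞ : Ξ.PosSemidef)
    (htr : Ξ.trace = (P : ℂ)) :
    Real.log ((1 + H * Ξ * H.conjTranspose).det.re)
      ≤ (H.rank : ℝ) *
          Real.log (1 + P * ∑ i, ∑ j, ‖H i j‖ ^ 2) :=
  logdet_le_rank_mul_log_frobenius_general N M H P Ξ hΞ htr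
end
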